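/- For any nonempty word η = x_{i1} ⋯ x_{il} ∈ X*, the full coproduct of the output feedback Hopf algebra satisfies Δ a_η = Θ̃_η (Δ a_∅), where Θ̃_η := Θ̃_{il} ∘ ⋯ ∘ Θ̃_{i1}, Θ̃_0 := θ̃_0 ⊗ id + id ⊗ θ̃_0 + θ̃_1 ⊗ κ_∅, Θ̃_1 := θ̃_1 ⊗ id + id ⊗ θ̃_1, and Δ a_∅ = a_∅ ⊗ 1 + 1 ⊗ a_∅. -/
import Mathlib


open scoped TensorProduct

noncomputable section

namespace Paper

/-- Words over the alphabet `X = {x0, x1}`, encoded as lists over `Fin 2`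
(`0` stands for the letter `x0` and `1` for the letter `x1`). -/
abbrev Word : Type := List (Fin 2)

/-- Formal power series `ℝ⟨⟨X⟩⟩`, given by their coefficient functions `η ↦ ⟨c,η⟩`. -/
abbrev Series : Type := Word → ℝ

/-- The left shift `x_i⁻¹(c)`. -/
def lshift (i : Fin 2) (c : Series) : Series := fun w => c (i :: w)

/-- Left concatenation `x_i c` of the letter `x_i` onto every word of `c`. -/
def lconcat (i : Fin 2) (c : Series) : Series := fun w =>
  match w with
  | [] => 0
  | j :: v => if j = i then c v else 0

/-- Right concatenation `p x_i` of the letter `x_i` onto every word of `p`. -/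
def rconcat {R : Type*} [Zero R] (i : Fin 2) (p : Word → R) : Word → R := fun w =>
  if w.getLast? = some i then p w.dropLast else 0

/-- The series of a single word. -/
def ind (η : Word) : Series := fun w => if w = η then 1 else 0

/-- The empty word as a series, the unit `∅` (often written `1`). -/
def one : Series := ind []

/-- The shuffle product, defined coefficientwise by the recursion
`⟨c ⧢ d, ∅⟩ = ⟨c,∅⟩⟨d,∅⟩` and `⟨c ⧢ d, x_i w⟩ = ⟨x_i⁻¹(c) ⧢ d, w⟩ + ⟨c ⧢ x_i⁻¹(d), w⟩`,
which is the bilinear (and ultrametrically continuous) extension of the recursive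
shuffle product of words. -/
def shuffleFn : Series → Series → Word → ℝ
  | c, d, [] => c [] * d []
  | c, d, i :: w => shuffleFn (lshift i c) d w + shuffleFn c (lshift i d) w

/-- The shuffle product on `ℝ⟨⟨X⟩⟩`. -/
def sh (c d : Series) : Series := shuffleFn c d

/-- The map `φ_d(x_i)` for the modified composition product:
`φ_d(x0)(e) = x0 e` and `φ_d(x1)(e) = x1 e + x0 (d ⧢ e)`. -/
def phiLetter (d : Series) (i : Fin 2) (e : Series) : Series :=
  if i = 0 then lconcat 0 e else lconcat 1 e + lconcat 0 (sh d e)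

/-- `φ_d(η)`, the algebra-homomorphism extension determined by
`φ_d(x_i η) = φ_d(x_i) ∘ φ_d(η)` and `φ_d(∅) = id`. -/
def phi (d : Series) : Word → Series → Series
  | [], e => e
  | i :: η, e => phiLetter d i (phi d η e)

/-- The modified composition product `c ∘̃ d = Σ_η ⟨c,η⟩ φ_d(η)(1)`. -/
def mcomp (c d : Series) : Series := fun w => ∑' η : Word, c η * phi d η one w

/-- The map `ψ_d(x_i)` for the composition product:
`ψ_d(x0)(e) = x0 e` and `ψ_d(x1)(e) = x0 (d ⧢ e)`. -/
def psiLetter (d : Series) (i : Fin 2) (e : Series) : Series :=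
  if i = 0 then lconcat 0 e else lconcat 0 (sh d e)

/-- `ψ_d(η)`, determined by `ψ_d(x_i η) = ψ_d(x_i) ∘ ψ_d(η)` and `ψ_d(∅) = id`. -/
def psi (d : Series) : Word → Series → Series
  | [], e => e
  | i :: η, e => psiLetter d i (psi d η e)

/-- The composition product `c ∘ d = Σ_η ⟨c,η⟩ ψ_d(η)(1)`. -/
def comp (c d : Series) : Series := fun w => ∑' η : Word, c η * psi d η one w

/-- The group operation on `ℝ⟨⟨X_δ⟩⟩ = {δ + c}`, transported to the `c`-parts:
`c_δ ∘ d_δ = δ + (d + c ∘̃ d)`. -/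
def gop (c d : Series) : Series := d + mcomp c d

/-- The Ferfera series `c = Σ_{k ≥ 0} k! x1^k`. -/
def ferfera : Series := fun w =>
  if w = List.replicate w.length (1 : Fin 2) then (Nat.factorial w.length : ℝ) else 0

/-- The degree of a word, `deg(η) = 2|η|_{x0} + |η|_{x1} + 1`. -/
def degW (η : Word) : ℕ := 2 * η.count 0 + η.count 1 + 1

/-- The output feedback Hopf algebra `H`: the free unital commutative `ℝ`-algebra on the
coordinate functions `a_η`, realized as polynomials in commuting variables indexed by words. -/
abbrev H : Type := MvPolynomial Word ℝ

/-- The coordinate function `a_η`. -/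
def aw (η : Word) : H := MvPolynomial.X η

/-- Character (pointwise) evaluation of elements of `H` at a series `c`:
`(a_{η₁} ⋯ a_{η_l})(c) = ⟨c,η₁⟩ ⋯ ⟨c,η_l⟩`, extended as an algebra map. -/
def evalS (c : Series) : H →ₐ[ℝ] ℝ := MvPolynomial.aeval c

/-- Evaluation of `H ⊗ H` at a pair of series: `(p ⊗ q)(c,d) = p(c) q(d)`. -/
def evalPair (c d : Series) : H ⊗[ℝ] H →ₗ[ℝ] ℝ :=
  (LinearMap.mul' ℝ ℝ).comp (TensorProduct.map (evalS c).toLinearMap (evalS d).toLinearMap)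

/-- The counit `ε` of `H`: `ε(a_η) = 0`, `ε(1) = 1`. -/
def counit : H →ₐ[ℝ] ℝ := evalS 0

/-- The defining property of the full coproduct `Δ` of the output feedback Hopf algebra:
`Δ a_η = Δ̃ a_η + 1 ⊗ a_η` where `Δ̃ a_η (c,d) = ⟨c ∘̃ d, η⟩`, i.e.
`(Δ a_η)(c,d) = ⟨c ∘̃ d, η⟩ + ⟨d, η⟩` for all series `c, d`; `Δ` is an algebra morphism. -/
def IsFBCoproduct (Δ : H →ₐ[ℝ] (H ⊗[ℝ] H)) : Prop :=
  ∀ (η : Word) (c d : Series), evalPair c d (Δ (aw η)) = mcomp c d η + d η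

/-- `S` is an antipode for the coproduct `Δ` (with counit `ε`):
`μ ∘ (S ⊗ id) ∘ Δ = 1·ε = μ ∘ (id ⊗ S) ∘ Δ`. -/
def IsAntipode (Δ : H →ₐ[ℝ] (H ⊗[ℝ] H)) (S : H →ₗ[ℝ] H) : Prop :=
  (∀ p : H, LinearMap.mul' ℝ H (TensorProduct.map S LinearMap.id (Δ p)) = counit p • 1) ∧
  (∀ p : H, LinearMap.mul' ℝ H (TensorProduct.map LinearMap.id S (Δ p)) = counit p • 1)

/-- The right-augmentation operator `θ̃_i`, the derivation on `H` with `θ̃_i(a_η) = a_{η x_i}`. -/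
def thetaR (i : Fin 2) : Derivation ℝ H H :=
  MvPolynomial.mkDerivation ℝ fun η => aw (η ++ [i])

/-- The left-augmentation operator `θ_i`, the derivation on `H` with `θ_i(a_η) = a_{x_i η}`. -/
def thetaL (i : Fin 2) : Derivation ℝ H H :=
  MvPolynomial.mkDerivation ℝ fun η => aw (i :: η)

/-- The multiplication operator `κ_∅(h) = h · a_∅`. -/
def kappaE : H →ₗ[ℝ] H := LinearMap.mulRight ℝ (aw [])

/-- The shuffle coefficient `⟨ξ ⧢ ν, η⟩`. -/
def shCoeff (ξ ν η : Word) : ℝ := sh (ind ξ) (ind ν) η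

/-- The finite set of words of length `n`. -/
def wordsLen (n : ℕ) : Finset Word :=
  (Finset.univ : Finset (Fin n → Fin 2)).image List.ofFn

/-- The deshuffle coproduct `Δ_⧢ a_η = Σ_{ξ,ν} ⟨ξ ⧢ ν, η⟩ a_ξ ⊗ a_ν`
(the unique coproduct satisfying `Δ_⧢ a_∅ = a_∅ ⊗ a_∅` and the coderivation recursions
with respect to the augmentation operators). -/
def deshuffle (η : Word) : H ⊗[ℝ] H :=
  ∑ k ∈ Finset.range (η.length + 1), ∑ ξ ∈ wordsLen k, ∑ ν ∈ wordsLen (η.length - k),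
    shCoeff ξ ν η • (aw ξ ⊗ₜ[ℝ] aw ν)

/-- Iterated integrals: `E_∅[u](t) = 1`, `E_{x_i η}[u](t) = ∫₀ᵗ u_i(s) E_η[u](s) ds`. -/
def E (u : Fin 2 → ℝ → ℝ) : Word → ℝ → ℝ
  | [], _ => 1
  | i :: η, t => ∫ s in (0:ℝ)..t, u i s * E u η s

end Paper

namespace Paper

/-- The operator `Θ̃_i` on `H ⊗ H`:
`Θ̃_0 := θ̃_0 ⊗ id + id ⊗ θ̃_0 + θ̃_1 ⊗ κ_∅` and `Θ̃_1 := θ̃_1 ⊗ id + id ⊗ θ̃_1`. -/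
def bigTheta (i : Fin 2) : H ⊗[ℝ] H →ₗ[ℝ] H ⊗[ℝ] H :=
  if i = 0 then
    TensorProduct.map (thetaR 0).toLinearMap LinearMap.id
      + TensorProduct.map LinearMap.id (thetaR 0).toLinearMap
      + TensorProduct.map (thetaR 1).toLinearMap kappaE
  else
    TensorProduct.map (thetaR 1).toLinearMap LinearMap.id
      + TensorProduct.map LinearMap.id (thetaR 1).toLinearMap

/-- `Θ̃_η := Θ̃_{i_l} ∘ ⋯ ∘ Θ̃_{i_1}` for `η = x_{i_1} ⋯ x_{i_l}`. -/
def bigThetaWord : Word → (H ⊗[ℝ] H →ₗ[ℝ] H ⊗[ℝ] H)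
  | [] => LinearMap.id
  | i :: η => bigThetaWord η ∘ₗ bigTheta i

end Paper

namespace Paper
-- generic left concatenation
def lcH {R : Type*} [Zero R] (i : Fin 2) (e : Word → R) : Word → R := fun w =>
  match w with
  | [] => 0
  | j :: v => if j = i then e v else 0

-- generic shuffle
def shFnG {R : Type*} [CommSemiring R] : (Word → R) → (Word → R) → Word → R
  | c, d, [] => c [] * d []
  | c, d, i :: w => shFnG (fun v => c (i :: v)) d w + shFnG c (fun v => d (i :: v)) w

lemma shFnG_add_right {R : Type*} [CommSemiring R] (w : Word) :
    ∀ (c d e : Word → R), shFnG c (fun v => d v + e v) w = shFnG c d w + shFnG c e w := by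
  induction w with
  | nil => intro c d e; simp [shFnG, mul_add]
  | cons i w ih => intro c d e; simp only [shFnG, ih]; ring

lemma shFnG_mul_right {R : Type*} [CommSemiring R] (w : Word) :
    ∀ (c d : Word → R) (h : R), shFnG c (fun v => d v * h) w = shFnG c d w * h := by
  induction w with
  | nil => intro c d h; simp [shFnG]; ring
  | cons i w ih => intro c d h; simp only [shFnG, ih]; ring

lemma shFnG_zero_right {R : Type*} [CommSemiring R] (w : Word) :
    ∀ (c : Word → R), shFnG c (fun _ => 0) w = 0 := by
  induction w with
  | nil => intro c; simp [shFnG]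
  | cons i w ih => intro c; simp only [shFnG, ih]; simp

lemma map_shFnG {R S : Type*} [CommSemiring R] [CommSemiring S] (f : R →+* S) (w : Word) :
    ∀ (c d : Word → R), f (shFnG c d w) = shFnG (fun v => f (c v)) (fun v => f (d v)) w := by
  induction w with
  | nil => intro c d; simp [shFnG]
  | cons i w ih => intro c d; simp only [shFnG, map_add, ih]

lemma shFnG_append {R : Type*} [CommSemiring R] (w : Word) (i : Fin 2) :
    ∀ (c d : Word → R), shFnG c d (w ++ [i]) =
      shFnG (fun v => c (v ++ [i])) d w + shFnG c (fun v => d (v ++ [i])) w := by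
  induction w with
  | nil => intro c d; simp [shFnG]
  | cons j w ih =>
      intro c d
      simp only [List.cons_append, shFnG, List.append_eq, ih]
      ring

lemma shFnG_eq_zero {R : Type*} [CommSemiring R] (w : Word) :
    ∀ (c e : Word → R), (∀ v : Word, v.length ≤ w.length → e v = 0) → shFnG c e w = 0 := by
  induction w with
  | nil => intro c e h; simp [shFnG, h [] (by simp)]
  | cons i w ih =>
      intro c e h
      simp only [shFnG]
      rw [ih _ _ (fun v hv => h v (le_trans hv (by simp))),
          ih _ _ (fun v hv => h (i :: v) (by simpa using Nat.succ_le_succ hv))]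
      simp


-- derivation through the shuffle
lemma derivation_shFnG (D : Derivation ℝ H H) (w : Word) :
    ∀ (c d : Word → H), D (shFnG c d w)
      = shFnG (fun v => D (c v)) d w + shFnG c (fun v => D (d v)) w := by
  induction w with
  | nil =>
      intro c d
      simp only [shFnG, Derivation.leibniz, smul_eq_mul]
      ring
  | cons i w ih =>
      intro c d
      simp only [shFnG, map_add, ih]
      ring

lemma thetaR_X (i : Fin 2) (ν : Word) : thetaR i (aw ν) = aw (ν ++ [i]) := by
  simp [thetaR, aw, MvPolynomial.mkDerivation_X]

/-- The universal coefficient polynomials: `evalS d (W ξ η) = ⟨φ_d(ξ)(1), η⟩`. -/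
def W : Word → Word → H
  | [] => fun η => if η = [] then 1 else 0
  | i :: ξ => fun η =>
      if i = 0 then lcH 0 (W ξ) η
      else lcH 1 (W ξ) η + lcH 0 (shFnG aw (W ξ)) η

lemma W_arg_nil : ∀ ξ : Word, W ξ [] = if ξ = [] then 1 else 0 := by
  intro ξ
  cases ξ with
  | nil => simp [W]
  | cons i ξ => by_cases hi : i = 0 <;> simp [W, hi, lcH]

lemma W_eq_zero : ∀ ξ η : Word, η.length < ξ.length → W ξ η = 0 := by
  intro ξ
  induction ξ with
  | nil => intro η h; simp at h
  | cons i ξ ih =>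
      intro η h
      cases η with
      | nil => rw [W_arg_nil]; simp
      | cons j η' =>
          have hlt : η'.length < ξ.length := by simpa using Nat.lt_of_succ_lt_succ h
          have hsh : shFnG aw (W ξ) η' = 0 :=
            shFnG_eq_zero η' _ _ (fun v hv => ih v (lt_of_le_of_lt hv hlt))
          by_cases hi : i = 0 <;> simp [W, hi, lcH, ih η' hlt, hsh]

lemma shuffleFn_eq (w : Word) : ∀ c d : Series, shuffleFn c d w = shFnG c d w := by
  induction w with
  | nil => intro c d; rfl
  | cons i w ih => intro c d; simp only [shuffleFn, ih]; rfl

lemma lconcat_eq (i : Fin 2) (c : Series) : lconcat i c = lcH i c := rfl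

lemma evalS_W (d : Series) : ∀ ξ η : Word, evalS d (W ξ η) = phi d ξ one η := by
  intro ξ
  induction ξ with
  | nil =>
      intro η
      by_cases hη : η = [] <;> simp [W, phi, one, ind, hη]
  | cons i ξ ih =>
      intro η
      have hsh : ∀ η' : Word, evalS d (shFnG aw (W ξ) η') = sh d (phi d ξ one) η' := by
        intro η'
        rw [show (evalS d (shFnG aw (W ξ) η'))
              = (evalS d).toRingHom (shFnG aw (W ξ) η') from rfl, map_shFnG]
        rw [sh, shuffleFn_eq]
        congr 1
        · funext ν; simp [evalS, aw]
        · funext ν; exact ih ν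
      fin_cases i
      · cases η with
        | nil => simp [W, lcH, phi, phiLetter, lconcat]
        | cons j η' => simp [W, lcH, phi, phiLetter, lconcat, ih, apply_ite (evalS d)]
      · cases η with
        | nil => simp [W, lcH, phi, phiLetter, lconcat]
        | cons j η' =>
            simp [W, lcH, phi, phiLetter, lconcat, ih, hsh, apply_ite (evalS d)]

lemma phi_eq_zero (d : Series) : ∀ (ξ : Word) (e : Series) (n : ℕ),
    (∀ w : Word, w.length < n → e w = 0) →
    ∀ η : Word, η.length < n + ξ.length → phi d ξ e η = 0 := by
  intro ξ
  induction ξ with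
  | nil => intro e n he η hη; exact he η (by simpa using hη)
  | cons i ξ ih =>
      intro e n he η hη
      have hlen : ∀ η' : Word, η = i :: η' → False ∨ η'.length < n + ξ.length := by
        intro η' h; right
        have := hη; subst h; simp at this; omega
      have hphi : ∀ η' : Word, η'.length < n + ξ.length → phi d ξ e η' = 0 :=
        fun η' h => ih e n he η' h
      have hsh : ∀ η' : Word, η'.length < n + ξ.length → sh d (phi d ξ e) η' = 0 := by
        intro η' h
        rw [sh, shuffleFn_eq]
        exact shFnG_eq_zero η' _ _ (fun v hv => hphi v (lt_of_le_of_lt hv h))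
      fin_cases i <;>
      · cases η with
        | nil => simp [phi, phiLetter, lconcat]
        | cons j η' =>
            have h' : η'.length < n + ξ.length := by simp at hη; omega
            simp [phi, phiLetter, lconcat, hphi η' h', hsh η' h']

lemma phi_one_eq_zero (d : Series) (ξ η : Word) (h : η.length < ξ.length) :
    phi d ξ one η = 0 :=
  phi_eq_zero d ξ one 0 (by intro w hw; omega) η (by simpa using h)

lemma mem_wordsLen {n : ℕ} {ξ : Word} : ξ ∈ wordsLen n ↔ ξ.length = n := by
  constructor
  · intro h
    simp only [wordsLen, Finset.mem_image, Finset.mem_univ, true_and] at h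
    obtain ⟨f, rfl⟩ := h
    simp
  · intro h
    subst h
    simp only [wordsLen, Finset.mem_image, Finset.mem_univ, true_and]
    exact ⟨ξ.get, List.ofFn_get ξ⟩

lemma mcomp_eq_sum (c d : Series) (η : Word) :
    mcomp c d η = ∑ k ∈ Finset.range (η.length + 1), ∑ ξ ∈ wordsLen k,
      c ξ * phi d ξ one η := by
  rw [mcomp]
  rw [tsum_eq_sum (s := (Finset.range (η.length + 1)).biUnion wordsLen) ?hz]
  · refine Finset.sum_biUnion ?hd
    intro k hk k' hk' hne
    simp only [Finset.disjoint_left]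
    intro ξ h1 h2
    exact hne (by rw [← mem_wordsLen.1 h1, mem_wordsLen.1 h2])
  · intro ξ hξ
    have : η.length < ξ.length := by
      by_contra hle
      push_neg at hle
      exact hξ (Finset.mem_biUnion.2 ⟨ξ.length, Finset.mem_range.2 (by omega),
        mem_wordsLen.2 rfl⟩)
    rw [phi_one_eq_zero d ξ η this, mul_zero]

/-- The explicit candidate for `Δ a_η`. -/
def Efam (η : Word) : H ⊗[ℝ] H :=
  (∑ k ∈ Finset.range (η.length + 1), ∑ ξ ∈ wordsLen k, aw ξ ⊗ₜ[ℝ] W ξ η)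
    + (1 : H) ⊗ₜ[ℝ] aw η

lemma evalPair_tmul (c d : Series) (p q : H) :
    evalPair c d (p ⊗ₜ[ℝ] q) = evalS c p * evalS d q := by
  simp [evalPair, LinearMap.mul'_apply]

lemma evalS_aw (c : Series) (ξ : Word) : evalS c (aw ξ) = c ξ := by
  simp [evalS, aw]

lemma evalPair_Efam (c d : Series) (η : Word) :
    evalPair c d (Efam η) = mcomp c d η + d η := by
  rw [mcomp_eq_sum, Efam, map_add, map_sum, evalPair_tmul, map_one, one_mul,
    evalS_aw]
  congr 1
  refine Finset.sum_congr rfl (fun k _ => ?_)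
  rw [map_sum]
  refine Finset.sum_congr rfl (fun ξ _ => ?_)
  rw [evalPair_tmul, evalS_aw, evalS_W]

/-- `H ⊗ H` as a polynomial ring on two copies of the variables. -/
def toSum : H ⊗[ℝ] H →ₐ[ℝ] MvPolynomial (Word ⊕ Word) ℝ :=
  Algebra.TensorProduct.productMap
    (MvPolynomial.rename Sum.inl) (MvPolynomial.rename Sum.inr)

def fromSum : MvPolynomial (Word ⊕ Word) ℝ →ₐ[ℝ] H ⊗[ℝ] H :=
  MvPolynomial.aeval
    (Sum.elim (fun w : Word => aw w ⊗ₜ[ℝ] 1) (fun w : Word => (1 : H) ⊗ₜ[ℝ] aw w))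

lemma fromSum_toSum (t : H ⊗[ℝ] H) : fromSum (toSum t) = t := by
  have h : fromSum.comp toSum = AlgHom.id ℝ (H ⊗[ℝ] H) := by
    apply Algebra.TensorProduct.ext
    · apply MvPolynomial.algHom_ext
      intro w
      simp [toSum, fromSum, aw]
    · apply MvPolynomial.algHom_ext
      intro w
      simp [toSum, fromSum, aw]
  exact DFunLike.congr_fun h t

lemma evalPair_eq_eval (c d : Series) (t : H ⊗[ℝ] H) :
    evalPair c d t = MvPolynomial.eval (Sum.elim c d) (toSum t) := by
  induction t with
  | zero => simp
  | tmul p q =>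
      rw [evalPair_tmul]
      simp only [toSum, Algebra.TensorProduct.productMap_apply_tmul, map_mul,
        MvPolynomial.eval_rename]
      rw [show (Sum.elim c d) ∘ Sum.inl = c from rfl,
          show (Sum.elim c d) ∘ Sum.inr = d from rfl]
      rw [evalS, evalS, ← MvPolynomial.coe_aeval_eq_eval, ← MvPolynomial.coe_aeval_eq_eval]
      rfl
  | add x y hx hy => simp [map_add, hx, hy]

lemma evalPair_sep {t s : H ⊗[ℝ] H}
    (h : ∀ c d : Series, evalPair c d t = evalPair c d s) : t = s := by
  have hts : toSum t = toSum s := by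
    apply MvPolynomial.funext
    intro x
    have hx := h (x ∘ Sum.inl) (x ∘ Sum.inr)
    rw [evalPair_eq_eval, evalPair_eq_eval] at hx
    rwa [show Sum.elim (x ∘ Sum.inl) (x ∘ Sum.inr) = x from funext (by rintro (a | b) <;> rfl)]
      at hx
  rw [← fromSum_toSum t, ← fromSum_toSum s, hts]

lemma rconcat_nil {R : Type*} [Zero R] (i : Fin 2) (p : Word → R) :
    rconcat i p [] = 0 := by simp [rconcat]

lemma rconcat_single {R : Type*} [Zero R] (i j : Fin 2) (p : Word → R) :
    rconcat i p [j] = if j = i then p [] else 0 := by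
  simp [rconcat]

lemma rconcat_cons {R : Type*} [Zero R] (i j x : Fin 2) (xs : Word) (p : Word → R) :
    rconcat i p (j :: x :: xs) = rconcat i (fun ζ => p (j :: ζ)) (x :: xs) := by
  simp [rconcat]

lemma rconcat_zero {R : Type*} [Zero R] (i : Fin 2) (ξ : Word) :
    rconcat i (fun _ => (0 : R)) ξ = 0 := by
  simp [rconcat]

lemma rconcat_concat {R : Type*} [Zero R] (i : Fin 2) (p : Word → R) (ζ : Word) :
    rconcat i p (ζ ++ [i]) = p ζ := by
  simp [rconcat, List.getLast?_concat, List.dropLast_concat]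

lemma rconcat_shFnG (m : Fin 2) (c : Word → H) (g : Word → Word → H) (η ξ : Word) :
    rconcat m (fun ζ => shFnG c (g ζ) η) ξ
      = shFnG c (fun ν => rconcat m (fun ζ => g ζ ν) ξ) η := by
  by_cases h : ξ.getLast? = some m <;> simp [rconcat, h, shFnG_zero_right]

lemma rconcat_W_nil (m x : Fin 2) (ξ : Word) :
    rconcat m (fun ζ => W ζ []) (x :: ξ) = if ξ = [] ∧ x = m then 1 else 0 := by
  cases ξ with
  | nil => rw [rconcat_single]; by_cases h : x = m <;> simp [h, W]
  | cons y ys =>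
      rw [rconcat_cons]
      have hfun : (fun ζ : Word => W (x :: ζ) []) = fun _ => (0 : H) := by
        funext ζ; rw [W_arg_nil]; simp
      rw [hfun, rconcat_zero]
      simp

lemma rconcat_W_cons0 (m j : Fin 2) (η' : Word) (ξ : Word) :
    rconcat m (fun ζ => W ζ (j :: η')) ((0 : Fin 2) :: ξ)
      = if j = 0 then rconcat m (fun ζ => W ζ η') ξ else 0 := by
  cases ξ with
  | nil =>
      rw [rconcat_single, rconcat_nil]
      by_cases h : (0 : Fin 2) = m <;> simp [h, W]
  | cons x xs =>
      rw [rconcat_cons]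
      have hfun : (fun ζ : Word => W ((0 : Fin 2) :: ζ) (j :: η'))
          = fun ζ => if j = 0 then W ζ η' else 0 := by
        funext ζ; simp [W, lcH]
      rw [hfun]
      by_cases hj : j = 0 <;> simp [hj, rconcat_zero]

lemma fin2_cases (k : Fin 2) : k = 0 ∨ k = 1 := by omega

lemma rconcat_W_cons1 (m j : Fin 2) (η' : Word) (ξ : Word) :
    rconcat m (fun ζ => W ζ (j :: η')) ((1 : Fin 2) :: ξ)
      = if j = 1 then rconcat m (fun ζ => W ζ η') ξ
        else shFnG aw (fun ν => rconcat m (fun ζ => W ζ ν) ξ) η' := by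
  cases ξ with
  | nil =>
      rw [rconcat_single]
      have h2 : (fun ν : Word => rconcat m (fun ζ => W ζ ν) ([] : Word)) = fun _ => (0 : H) := by
        funext ν; rw [rconcat_nil]
      by_cases h : (1 : Fin 2) = m <;> by_cases hj : j = 1 <;>
        simp [h, hj, W, rconcat_nil, h2, shFnG_zero_right]
  | cons x xs =>
      rw [rconcat_cons]
      rcases fin2_cases j with hj | hj <;> subst hj
      · have hfun : (fun ζ : Word => W ((1 : Fin 2) :: ζ) ((0 : Fin 2) :: η'))
            = fun ζ => shFnG aw (W ζ) η' := by
          funext ζ; simp [W, lcH]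
        rw [hfun, rconcat_shFnG]
        simp
      · have hfun : (fun ζ : Word => W ((1 : Fin 2) :: ζ) ((1 : Fin 2) :: η'))
            = fun ζ => W ζ η' := by
          funext ζ; simp [W, lcH]
        rw [hfun]
        simp

/-- The correction term in the right-append recursion for `W`. -/
def Rt (i : Fin 2) (η ξ : Word) : H :=
  if i = 0 then
    rconcat 0 (fun ζ => W ζ η) ξ + rconcat 1 (fun ζ => W ζ η) ξ * aw []
  else rconcat 1 (fun ζ => W ζ η) ξ

lemma Rt_nil_right (i : Fin 2) (η : Word) : Rt i η [] = 0 := by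
  by_cases hi : i = 0 <;> simp [Rt, hi, rconcat_nil]

lemma Rt_cons0 (i j : Fin 2) (η' ξ : Word) :
    Rt i (j :: η') ((0 : Fin 2) :: ξ) = if j = 0 then Rt i η' ξ else 0 := by
  by_cases hi : i = 0 <;> by_cases hj : j = 0 <;>
    simp [Rt, hi, hj, rconcat_W_cons0]

lemma Rt_cons1 (i j : Fin 2) (η' ξ : Word) :
    Rt i (j :: η') ((1 : Fin 2) :: ξ)
      = if j = 1 then Rt i η' ξ else shFnG aw (fun ν => Rt i ν ξ) η' := by
  rcases fin2_cases j with hj | hj <;> subst hj <;> by_cases hi : i = 0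
  · rw [if_neg (by decide)]
    simp only [Rt, if_pos hi, rconcat_W_cons1, if_neg (by decide : ¬(0 : Fin 2) = 1)]
    rw [shFnG_add_right, shFnG_mul_right]
  · rw [if_neg (by decide)]
    simp only [Rt, if_neg hi, rconcat_W_cons1, if_neg (by decide : ¬(0 : Fin 2) = 1)]
  · rw [if_pos rfl]
    simp [Rt, if_pos hi, rconcat_W_cons1]
  · rw [if_pos rfl]
    simp [Rt, if_neg hi, rconcat_W_cons1]

lemma W_append (i : Fin 2) : ∀ ξ η : Word, W ξ (η ++ [i]) = thetaR i (W ξ η) + Rt i η ξ := by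
  intro ξ
  induction ξ with
  | nil =>
      intro η
      rw [Rt_nil_right]
      have h1 : W [] (η ++ [i]) = 0 := by simp [W]
      have h2 : thetaR i (W [] η) = 0 := by
        by_cases hη : η = [] <;> simp [W, hη]
      rw [h1, h2, add_zero]
  | cons x ξ ih =>
      intro η
      rcases fin2_cases x with hx | hx <;> subst hx
      · -- head letter x0
        cases η with
        | nil =>
            have h0 : W ((0 : Fin 2) :: ξ) [] = 0 := by simp [W, lcH]
            rw [h0, map_zero, zero_add, show ([] : Word) ++ [i] = [i] from rfl]
            have hL : W ((0 : Fin 2) :: ξ) [i]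
                = if i = 0 then (if ξ = [] then (1 : H) else 0) else 0 := by
              by_cases hi : i = 0 <;> simp [W, lcH, hi, W_arg_nil]
            have hR : Rt i [] ((0 : Fin 2) :: ξ)
                = if i = 0 then (if ξ = [] then (1 : H) else 0) else 0 := by
              by_cases hi : i = 0 <;> simp [Rt, hi, rconcat_W_nil]
            rw [hL, hR]
        | cons j η' =>
            have hLHS : W ((0 : Fin 2) :: ξ) ((j :: η') ++ [i])
                = if j = 0 then W ξ (η' ++ [i]) else 0 := by
              simp [W, lcH]
            have hW : W ((0 : Fin 2) :: ξ) (j :: η') = if j = 0 then W ξ η' else 0 := by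
              simp [W, lcH]
            rw [hLHS, hW, Rt_cons0, ih η']
            by_cases hj : j = 0 <;> simp [hj]
      · -- head letter x1
        cases η with
        | nil =>
            have h0 : W ((1 : Fin 2) :: ξ) [] = 0 := by simp [W, lcH]
            rw [h0, map_zero, zero_add, show ([] : Word) ++ [i] = [i] from rfl]
            have hL : W ((1 : Fin 2) :: ξ) [i]
                = (if i = 1 then (if ξ = [] then (1 : H) else 0) else 0)
                  + (if i = 0 then (if ξ = [] then (1 : H) else 0) * aw [] else 0) := by
              by_cases hi : i = 0
              · subst hi
                simp [W, lcH, shFnG, W_arg_nil, mul_comm]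
              · have hi1 : i = 1 := by rcases fin2_cases i with h | h <;> simp_all
                subst hi1
                simp [W, lcH, W_arg_nil]
            have hR : Rt i [] ((1 : Fin 2) :: ξ)
                = (if i = 1 then (if ξ = [] then (1 : H) else 0) else 0)
                  + (if i = 0 then (if ξ = [] then (1 : H) else 0) * aw [] else 0) := by
              by_cases hi : i = 0
              · subst hi
                simp [Rt, rconcat_W_nil]
              · have hi1 : i = 1 := by rcases fin2_cases i with h | h <;> simp_all
                subst hi1
                simp [Rt, rconcat_W_nil]
            rw [hL, hR]
        | cons j η' =>
            have hLHS : W ((1 : Fin 2) :: ξ) ((j :: η') ++ [i])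
                = (if j = 1 then W ξ (η' ++ [i]) else 0)
                  + (if j = 0 then shFnG aw (W ξ) (η' ++ [i]) else 0) := by
              simp [W, lcH]
            have hW : W ((1 : Fin 2) :: ξ) (j :: η')
                = (if j = 1 then W ξ η' else 0)
                  + (if j = 0 then shFnG aw (W ξ) η' else 0) := by
              simp [W, lcH]
            rw [hLHS, hW, Rt_cons1]
            rcases fin2_cases j with hj | hj <;> subst hj
            · simp only [eq_false (by decide : ¬(0 : Fin 2) = 1),
                eq_true (rfl : (0 : Fin 2) = 0), if_true, if_false, zero_add]
              rw [shFnG_append]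
              have e1 : (fun v : Word => aw (v ++ [i])) = fun v => thetaR i (aw v) := by
                funext v; rw [thetaR_X]
              have e2 : (fun v : Word => W ξ (v ++ [i]))
                  = fun v => thetaR i (W ξ v) + Rt i v ξ := by
                funext v; rw [ih v]
              rw [e1, e2, shFnG_add_right, derivation_shFnG]
              ring
            · simp only [eq_false (by decide : ¬(1 : Fin 2) = 0),
                eq_true (rfl : (1 : Fin 2) = 1), if_true, if_false, add_zero]
              rw [ih η']

lemma rconcat_mul (m : Fin 2) (p : Word → H) (h : H) (ξ : Word) :
    rconcat m p ξ * h = rconcat m (fun ζ => p ζ * h) ξ := by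
  by_cases hc : ξ.getLast? = some m <;> simp [rconcat, hc]

lemma wordsLen_zero : wordsLen 0 = {([] : Word)} := by
  ext ξ
  rw [mem_wordsLen]
  simp [List.length_eq_zero_iff]

lemma sum_wordsLen_rconcat (m : Fin 2) (g : Word → H) (k : ℕ) :
    ∑ ξ ∈ wordsLen (k + 1), aw ξ ⊗ₜ[ℝ] rconcat m g ξ
      = ∑ ζ ∈ wordsLen k, aw (ζ ++ [m]) ⊗ₜ[ℝ] g ζ := by
  have hsub : (wordsLen k).image (fun ζ => ζ ++ [m]) ⊆ wordsLen (k + 1) := by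
    intro ξ hξ
    simp only [Finset.mem_image] at hξ
    obtain ⟨ζ, hζ, rfl⟩ := hξ
    rw [mem_wordsLen]
    simp [mem_wordsLen.1 hζ]
  have hz : ∀ ξ ∈ wordsLen (k + 1), ξ ∉ (wordsLen k).image (fun ζ => ζ ++ [m]) →
      aw ξ ⊗ₜ[ℝ] rconcat m g ξ = 0 := by
    intro ξ hmem hnot
    by_cases h : ξ.getLast? = some m
    · exfalso
      obtain ⟨ζ, rfl⟩ : ∃ ζ : Word, ξ = ζ ++ [m] := by
        rcases List.getLast?_eq_some_iff.1 h with ⟨ζ, hζ⟩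
        exact ⟨ζ, hζ⟩
      refine hnot (Finset.mem_image.2 ⟨ζ, ?_, rfl⟩)
      rw [mem_wordsLen]
      have := mem_wordsLen.1 hmem
      simpa using this
    · rw [show rconcat m g ξ = 0 from by simp [rconcat, h], TensorProduct.tmul_zero]
  rw [← Finset.sum_subset hsub hz]
  rw [Finset.sum_image (fun a _ b _ hab => by simpa using congrArg List.dropLast hab)]
  refine Finset.sum_congr rfl (fun ζ _ => ?_)
  rw [rconcat_concat]

lemma sum_rconcat (m : Fin 2) (g : Word → H) (n : ℕ) :
    ∑ k ∈ Finset.range (n + 2), ∑ ξ ∈ wordsLen k, aw ξ ⊗ₜ[ℝ] rconcat m g ξ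
      = ∑ k ∈ Finset.range (n + 1), ∑ ζ ∈ wordsLen k, aw (ζ ++ [m]) ⊗ₜ[ℝ] g ζ := by
  rw [Finset.sum_range_succ']
  have h0 : ∑ ξ ∈ wordsLen 0, aw ξ ⊗ₜ[ℝ] rconcat m g ξ = 0 := by
    rw [wordsLen_zero]
    simp [rconcat_nil]
  rw [h0, add_zero]
  exact Finset.sum_congr rfl (fun k _ => sum_wordsLen_rconcat m g k)

lemma Efam_append (i : Fin 2) (η : Word) :
    Efam (η ++ [i])
      = ((∑ k ∈ Finset.range (η.length + 2), ∑ ξ ∈ wordsLen k,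
          aw ξ ⊗ₜ[ℝ] thetaR i (W ξ η))
        + ∑ k ∈ Finset.range (η.length + 2), ∑ ξ ∈ wordsLen k,
          aw ξ ⊗ₜ[ℝ] Rt i η ξ)
        + (1 : H) ⊗ₜ[ℝ] aw (η ++ [i]) := by
  rw [Efam]
  have hlen : (η ++ [i]).length + 1 = η.length + 2 := by simp
  rw [hlen]
  congr 1
  rw [← Finset.sum_add_distrib]
  refine Finset.sum_congr rfl fun k _ => ?_
  rw [← Finset.sum_add_distrib]
  refine Finset.sum_congr rfl fun ξ _ => ?_
  rw [W_append i ξ η, TensorProduct.tmul_add]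

lemma sum_theta_trim (i : Fin 2) (η : Word) :
    ∑ k ∈ Finset.range (η.length + 2), ∑ ξ ∈ wordsLen k, aw ξ ⊗ₜ[ℝ] thetaR i (W ξ η)
      = ∑ k ∈ Finset.range (η.length + 1), ∑ ξ ∈ wordsLen k, aw ξ ⊗ₜ[ℝ] thetaR i (W ξ η) := by
  rw [Finset.sum_range_succ]
  have h0 : ∑ ξ ∈ wordsLen (η.length + 1), aw ξ ⊗ₜ[ℝ] thetaR i (W ξ η) = 0 :=
    Finset.sum_eq_zero fun ξ hξ => by
      rw [W_eq_zero ξ η (by rw [mem_wordsLen.1 hξ]; omega), map_zero,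
        TensorProduct.tmul_zero]
  rw [h0, add_zero]

lemma bigTheta_one_Efam (η : Word) : bigTheta 1 (Efam η) = Efam (η ++ [1]) := by
  have hb : bigTheta 1 = TensorProduct.map (thetaR 1).toLinearMap LinearMap.id
      + TensorProduct.map LinearMap.id (thetaR 1).toLinearMap := by
    rw [bigTheta, if_neg (by decide)]
  have hRt : ∀ ξ : Word, Rt 1 η ξ = rconcat 1 (fun ζ => W ζ η) ξ := fun ξ => by
    rw [Rt, if_neg (by decide)]
  rw [Efam_append, sum_theta_trim]
  conv_rhs => rw [show (∑ k ∈ Finset.range (η.length + 2), ∑ ξ ∈ wordsLen k,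
      aw ξ ⊗ₜ[ℝ] Rt 1 η ξ)
    = ∑ k ∈ Finset.range (η.length + 2), ∑ ξ ∈ wordsLen k,
      aw ξ ⊗ₜ[ℝ] rconcat 1 (fun ζ => W ζ η) ξ from
    Finset.sum_congr rfl fun k _ => Finset.sum_congr rfl fun ξ _ => by rw [hRt]]
  rw [sum_rconcat]
  rw [hb, LinearMap.add_apply, Efam, map_add, map_add, TensorProduct.map_tmul,
    TensorProduct.map_tmul, map_sum, map_sum]
  simp only [map_sum, TensorProduct.map_tmul, LinearMap.id_coe, id_eq,
    Derivation.coeFn_coe, thetaR_X, Derivation.map_one_eq_zero,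
    TensorProduct.zero_tmul, add_zero]
  abel

lemma bigTheta_zero_Efam (η : Word) : bigTheta 0 (Efam η) = Efam (η ++ [0]) := by
  have hb : bigTheta 0 = TensorProduct.map (thetaR 0).toLinearMap LinearMap.id
      + TensorProduct.map LinearMap.id (thetaR 0).toLinearMap
      + TensorProduct.map (thetaR 1).toLinearMap kappaE := by
    rw [bigTheta, if_pos rfl]
  have hRt : ∀ ξ : Word, Rt 0 η ξ = rconcat 0 (fun ζ => W ζ η) ξ
      + rconcat 1 (fun ζ => W ζ η * aw []) ξ := fun ξ => by
    rw [Rt, if_pos rfl, rconcat_mul]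
  rw [Efam_append, sum_theta_trim]
  conv_rhs => rw [show (∑ k ∈ Finset.range (η.length + 2), ∑ ξ ∈ wordsLen k,
      aw ξ ⊗ₜ[ℝ] Rt 0 η ξ)
    = (∑ k ∈ Finset.range (η.length + 2), ∑ ξ ∈ wordsLen k,
        aw ξ ⊗ₜ[ℝ] rconcat 0 (fun ζ => W ζ η) ξ)
      + ∑ k ∈ Finset.range (η.length + 2), ∑ ξ ∈ wordsLen k,
        aw ξ ⊗ₜ[ℝ] rconcat 1 (fun ζ => W ζ η * aw []) ξ from by
    rw [← Finset.sum_add_distrib]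
    refine Finset.sum_congr rfl fun k _ => ?_
    rw [← Finset.sum_add_distrib]
    exact Finset.sum_congr rfl fun ξ _ => by rw [hRt, TensorProduct.tmul_add]]
  rw [sum_rconcat, sum_rconcat]
  rw [hb, LinearMap.add_apply, LinearMap.add_apply, Efam]
  simp only [map_add, map_sum, TensorProduct.map_tmul, LinearMap.id_coe, id_eq,
    Derivation.coeFn_coe, thetaR_X, Derivation.map_one_eq_zero,
    TensorProduct.zero_tmul, add_zero, kappaE, LinearMap.mulRight_apply]
  abel

lemma bigTheta_Efam (i : Fin 2) (η : Word) : bigTheta i (Efam η) = Efam (η ++ [i]) := by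
  rcases fin2_cases i with h | h <;> subst h
  exacts [bigTheta_zero_Efam η, bigTheta_one_Efam η]

lemma bigThetaWord_append (η : Word) (i : Fin 2) :
    bigThetaWord (η ++ [i]) = bigTheta i ∘ₗ bigThetaWord η := by
  induction η with
  | nil => simp [bigThetaWord]
  | cons j η ih => simp [bigThetaWord, ih, LinearMap.comp_assoc]

lemma Efam_nil : Efam [] = aw [] ⊗ₜ[ℝ] (1 : H) + (1 : H) ⊗ₜ[ℝ] aw [] := by
  rw [Efam]
  simp [wordsLen_zero, W]

lemma bigThetaWord_Efam : ∀ η : Word, bigThetaWord η (Efam []) = Efam η := by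
  intro η
  induction η using List.reverseRecOn with
  | nil => rfl
  | append_singleton ζ i ih =>
      rw [bigThetaWord_append, LinearMap.comp_apply, ih, bigTheta_Efam]

end Paper

open Paper in
/-- For any nonempty word `η = x_{i_1} ⋯ x_{i_l} ∈ X*`, the full
coproduct of the output feedback Hopf algebra satisfies `Δ a_η = Θ̃_η (Δ a_∅)`, where
`Δ a_∅ = a_∅ ⊗ 1 + 1 ⊗ a_∅`. -/
theorem coproduct_right_augmentation_formula
    (Δ : H →ₐ[ℝ] (H ⊗[ℝ] H)) (hΔ : IsFBCoproduct Δ) :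
    ∀ η : Word, η ≠ [] →
      Δ (aw η) = bigThetaWord η (aw [] ⊗ₜ[ℝ] (1 : H) + (1 : H) ⊗ₜ[ℝ] aw []) := by
  intro η _
  have h1 : Δ (aw η) = Efam η := evalPair_sep fun c d => by rw [hΔ, evalPair_Efam]
  rw [h1, ← Efam_nil, bigThetaWord_Efam]
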